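/- Let Σ be a type, w : ℕ → Option Σ, ζ : Σ, u : ℕ, and let w' := Function.update w u (some ζ). Suppose there are positions with x_o ≤ v₁, v₁ ⤳_{w'} u, u < y_o, y_o ≤ v₂, v₂ ⤳_{w'} y_c, such that w' y_c = some ζ and w[x_o,v₁] = w[y_o,v₂]. Then w'[x_o,u] = w'[y_o,y_c]. (Case 3.3 of the proof of Lemma 3.4 of the paper: insertion at the right endpoint of the first interval, matching the symbol at the right endpoint of the second interval.) -/

import Mathlib

/-!
Since the positions strictly between `v₁` and `u` (resp. `v₂` and `yc`) are empty, each side is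
the subword ending at `v₁` (resp. `v₂`) followed by the symbol `ζ`; and as `u` lies outside both
intervals `[xo, v₁]` and `[yo, v₂]`, the insertion does not change those subwords.
-/

/-- `y` carries the next symbol after `x` in the partial word `w`. -/
def Nxt {α : Type*} (w : ℕ → Option α) (x y : ℕ) : Prop :=
  w x ≠ none ∧ w y ≠ none ∧ x < y ∧ ∀ z, x < z → z < y → w z = none

/-- The subword of `w` between positions `i` and `j` (inclusive). -/
def subword {α : Type*} (w : ℕ → Option α) (i j : ℕ) : List α :=
  (List.range' i (j + 1 - i)).filterMap w

section Subword

variable {α : Type*} (w : ℕ → Option α)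

theorem subword_succ_right {i j : ℕ} (h : i ≤ j + 1) :
    subword w i (j + 1) = subword w i j ++ (w (j + 1)).toList := by
  have hlen : j + 1 + 1 - i = (j + 1 - i) + 1 := by omega
  have hlast : i + (j + 1 - i) = j + 1 := by omega
  rw [subword, subword, hlen, List.range'_1_concat, List.filterMap_append, hlast]
  cases hw : w (j + 1) <;> simp [hw]

theorem subword_eq_of_forall_eq_none {i k j : ℕ} (hik : i ≤ k) (hkj : k ≤ j)
    (h : ∀ z, k < z → z ≤ j → w z = none) :
    subword w i j = subword w i k := by
  induction j, hkj using Nat.le_induction with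
  | base => rfl
  | succ j hkj ih =>
    rw [subword_succ_right w (by omega), h (j + 1) (by omega) le_rfl,
      ih fun z hz hzj => h z hz (by omega)]
    simp

theorem subword_update_of_notMem {u i j : ℕ} (a : Option α) (hu : u ∉ Set.Icc i j) :
    subword (Function.update w u a) i j = subword w i j := by
  refine List.filterMap_congr fun z hz => Function.update_of_ne ?_ _ _
  rw [List.mem_range'_1] at hz
  rintro rfl
  exact hu ⟨hz.1, by omega⟩

theorem Nxt.subword_eq {v u : ℕ} (hvu : Nxt w v u) {i : ℕ} (hiv : i ≤ v) :
    subword w i u = subword w i v ++ (w u).toList := by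
  obtain ⟨-, -, hlt, hgap⟩ := hvu
  obtain ⟨j, rfl⟩ : ∃ j, u = j + 1 := ⟨u - 1, by omega⟩
  rw [subword_succ_right w (by omega),
    subword_eq_of_forall_eq_none w hiv (by omega) fun z hz hzj => hgap z hz (by omega)]

end Subword

theorem insertion_right_endpoint_case {α : Type*} (w : ℕ → Option α) (ζ : α)
    (u xo yo yc v₁ v₂ : ℕ)
    (h₁ : xo ≤ v₁) (hn₁ : Nxt (Function.update w u (some ζ)) v₁ u) (h₂ : u < yo)
    (h₃ : yo ≤ v₂) (hn₂ : Nxt (Function.update w u (some ζ)) v₂ yc)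
    (hy : (Function.update w u (some ζ)) yc = some ζ)
    (heq : subword w xo v₁ = subword w yo v₂) :
    subword (Function.update w u (some ζ)) xo u =
      subword (Function.update w u (some ζ)) yo yc := by
  have hv₁u : v₁ < u := hn₁.2.2.1
  rw [hn₁.subword_eq _ h₁, hn₂.subword_eq _ h₃, Function.update_self, hy,
    subword_update_of_notMem _ _ fun hu => hv₁u.not_ge hu.2,
    subword_update_of_notMem _ _ fun hu => h₂.not_ge hu.1, heq]
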